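/- On the Lie algebroid Ā = ℝ⁵ → ℝ³ with anchor ρ̄(x,y,u,w,𝒰) = (x,y,u, ẋ = a(x,y)w, ẏ = b(x,y)w, u̇ = 𝒰) and abelian bracket, the 1-form θ = ē^𝒰 − c(x,y,u) ē^w satisfies δθ = c_u ē^w ∧ θ, so the algebraic ideal generated by θ is a differential ideal; moreover, a section i: (x,y) ↦ (x,y,u(x,y)) is an integral manifold of ⟨θ⟩ if and only if u solves the semilinear PDE a u_x + b u_y = c(x,y,u). -/
import Mathlib


open scoped BigOperators

noncomputable section

/-- Points of `M̄ = ℝ³`, coordinates `(x, y, u)`. -/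
abbrev R3 := ℝ × ℝ × ℝ

def Dx (f : R3 → ℝ) (z : R3) : ℝ := fderiv ℝ f z (1, 0, 0)
def Dy (f : R3 → ℝ) (z : R3) : ℝ := fderiv ℝ f z (0, 1, 0)
def Du (f : R3 → ℝ) (z : R3) : ℝ := fderiv ℝ f z (0, 0, 1)

/-- Sections of the Lie algebroid `Ā = ℝ⁵ → ℝ³`: coefficients `(P, Q)` with
respect to the basis `{ē_w, ē_𝒰}`. -/
abbrev SecA := (R3 → ℝ) × (R3 → ℝ)

/-- The anchor `ρ̄(x,y,u,w,𝒰) = (x,y,u, ẋ = a w, ẏ = b w, u̇ = 𝒰)` of `Ā`, as a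
differential operator on functions: `ρ̄(ē_w) = a ∂x + b ∂y`, `ρ̄(ē_𝒰) = ∂u`. -/
def DopA (a b : ℝ × ℝ → ℝ) (X : SecA) (f : R3 → ℝ) : R3 → ℝ := fun z =>
  X.1 z * (a (z.1, z.2.1) * Dx f z + b (z.1, z.2.1) * Dy f z) + X.2 z * Du f z

/-- The (abelian) bracket of `Ā`, extended by Leibniz from
`⟦ē_w,ē_w⟧ = ⟦ē_w,ē_𝒰⟧ = ⟦ē_𝒰,ē_𝒰⟧ = 0`. -/
def brA (a b : ℝ × ℝ → ℝ) (X Y : SecA) : SecA :=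
  (fun z => DopA a b X Y.1 z - DopA a b Y X.1 z,
   fun z => DopA a b X Y.2 z - DopA a b Y X.2 z)

/-- A 1-form `A ē^w + B ē^𝒰` evaluated on a section. -/
def ev1 (σ : (R3 → ℝ) × (R3 → ℝ)) (X : SecA) : R3 → ℝ := fun z =>
  σ.1 z * X.1 z + σ.2 z * X.2 z

/-- The Koszul formula for `δσ` on `Ā`, evaluated on two sections. -/
def d1 (a b : ℝ × ℝ → ℝ) (σ : (R3 → ℝ) × (R3 → ℝ)) (X Y : SecA) : R3 → ℝ := fun z =>
  DopA a b X (ev1 σ Y) z - DopA a b Y (ev1 σ X) z - ev1 σ (brA a b X Y) z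

/-- The 1-form `θ = ē^𝒰 − c ē^w`. -/
def θform (c : R3 → ℝ) : (R3 → ℝ) × (R3 → ℝ) := (fun z => -c z, fun _ => 1)

/-- The basis sections `ē_w` and `ē_𝒰`. -/
def ebw : SecA := (fun _ => 1, fun _ => 0)
def ebU : SecA := (fun _ => 0, fun _ => 1)

/-- On the Lie algebroid `Ā = ℝ⁵ → ℝ³` with anchor
`ρ̄(x,y,u,w,𝒰) = (x,y,u, ẋ = a(x,y)w, ẏ = b(x,y)w, u̇ = 𝒰)` and abelian bracket,
the 1-form `θ = ē^𝒰 − c(x,y,u) ē^w` satisfies `δθ = c_u ē^w ∧ θ` (so the algebraic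
ideal generated by `θ` is a differential ideal); moreover a section
`i : (x,y) ↦ (x,y,u(x,y))` is an integral manifold of `⟨θ⟩` if and only if `u`
solves the semilinear PDE `a u_x + b u_y = c(x,y,u)`.  The first claim is the
equality of the two 2-forms on the basis sections `{ē_w, ē_𝒰}` (hence everywhere);
the second claim expresses `I^*θ = 0` with `I` the `i`-induced section
`I(x,y,w) = (x, y, u(x,y), w, u_x a w + u_y b w)`. -/
theorem semilinear_pde_eds
    (a b : ℝ × ℝ → ℝ) (c : R3 → ℝ)
    (ha : ContDiff ℝ (⊤ : ℕ∞) a) (hb : ContDiff ℝ (⊤ : ℕ∞) b) (hc : ContDiff ℝ (⊤ : ℕ∞) c)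
    (u : ℝ × ℝ → ℝ) (hu : ContDiff ℝ (⊤ : ℕ∞) u) :
    -- `δθ = c_u ē^w ∧ θ`:
    (∀ ξ ∈ ({ebw, ebU} : Set SecA), ∀ η ∈ ({ebw, ebU} : Set SecA), ∀ z : R3,
      d1 a b (θform c) ξ η z
        = Du c z * (ev1 (fun _ => 1, fun _ => 0) ξ z * ev1 (θform c) η z
            - ev1 (fun _ => 1, fun _ => 0) η z * ev1 (θform c) ξ z))
    -- integral manifolds of `⟨θ⟩` ↔ solutions of the semilinear PDE:
    ∧ ((∀ q : ℝ × ℝ,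
          -c (q.1, q.2, u q) * 1
            + 1 * (a q * fderiv ℝ u q (1, 0) + b q * fderiv ℝ u q (0, 1)) = 0)
        ↔ (∀ q : ℝ × ℝ,
          a q * fderiv ℝ u q (1, 0) + b q * fderiv ℝ u q (0, 1)
            = c (q.1, q.2, u q))) := by
  constructor
  · intro ξ hξ η hη z
    have h1 : ev1 (θform c) ebw = fun z => -c z := by
      funext z; simp [ev1, θform, ebw]
    have h2 : ev1 (θform c) ebU = fun _ => (1 : ℝ) := by
      funext z; simp [ev1, θform, ebU]
    rcases hξ with h | h <;> rcases hη with h' | h' <;> subst h <;> subst h' <;>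
      simp only [d1, h1, h2] <;>
      simp [DopA, brA, ev1, ebw, ebU, θform, Dx, Dy, Du, fderiv_neg] <;>
      ring
  · constructor
    · intro h q
      have := h q
      linarith
    · intro h q
      have := h q
      linarith

end
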